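/- arXiv:0804.1268 — 3 statements merged into one kernel-verified Lean document; each statement's English description precedes it below -/
import Mathlib

section
/- There exists, for each odd N ≥ 5, a distribution on graphs with vertex set {1,...,N} such that every edge appears with probability 1/2, every pair of distinct potential edges appears with probability 1/4 (i.e. the edge indicators are pairwise independent), the graph is disconnected with probability 1 − 2^{1−N}, and the graph contains no perfect matching with probability 1. -/
/-!
Colour the vertices by a uniformly random `f : Fin N → Bool` and join two vertices of the same
colour. Because `N` is odd, complementing `V₁` swaps odd and even subsets, so this graph has the
same law as the two-clique graph with `|V₁|` odd.

Flipping the colour of a vertex `v` is a measure-preserving involution that toggles every edge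
at `v` and fixes every edge avoiding `v`. An edge therefore has probability `1/2`. For distinct
edges `e ≠ e'`, flipping a vertex of `e'` that is not in `e` shows that `e'` has conditional
probability `1/2` given `e`. The graph is connected iff `f` is constant, and it has no perfect
matching because `N` is odd.
-/

open MeasureTheory ProbabilityTheory

namespace SimpleGraph

variable {V α : Type*}

def fiberGraph (f : V → α) : SimpleGraph V where
  Adj a b := a ≠ b ∧ f a = f b
  symm := ⟨fun _ _ h => ⟨h.1.symm, h.2.symm⟩⟩
  loopless := ⟨fun _ h => h.1 rfl⟩

@[simp]
lemma fiberGraph_adj {f : V → α} {a b : V} : (fiberGraph f).Adj a b ↔ a ≠ b ∧ f a = f b :=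
  Iff.rfl

lemma fiberGraph_connected_iff [Nonempty V] {f : V → α} :
    (fiberGraph f).Connected ↔ ∀ a b, f a = f b := by
  refine ⟨fun hconn a b => ?_, fun hconst => ?_⟩
  · have hab := (reachable_iff_reflTransGen a b).1 (hconn.preconnected a b)
    induction hab with
    | refl => rfl
    | tail _ hadj ih => exact ih.trans hadj.2
  · rw [connected_iff]
    refine ⟨fun a b => ?_, inferInstance⟩
    by_cases hab : a = b
    · exact hab ▸ Reachable.refl a
    · exact Adj.reachable ⟨hab, hconst a b⟩

end SimpleGraph

open SimpleGraph

lemma Sym2.exists_mem_notMem_of_ne {V : Type*} {e e' : Sym2 V} (hne : e ≠ e')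
    (he' : ¬e'.IsDiag) : ∃ v ∈ e', v ∉ e := by
  induction e' using Sym2.ind with
  | _ k l =>
    by_contra! h
    exact hne ((Sym2.mem_and_mem_iff (Sym2.mk_isDiag_iff.not.1 he')).1
      ⟨h k (Sym2.mem_mk_left k l), h l (Sym2.mem_mk_right k l)⟩)

section FlipCoord

variable {V : Type*} [DecidableEq V]

def flipCoord (v : V) : Equiv.Perm (V → Bool) :=
  Function.Involutive.toPerm (fun f => Function.update f v (!f v)) fun f => by simp

lemma flipCoord_apply (v : V) (f : V → Bool) (a : V) :
    flipCoord v f a = if a = v then !f v else f a :=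
  Function.update_apply f v _ a

lemma flipCoord_preimage_edge_of_notMem {v : V} {e : Sym2 V} (hv : v ∉ e) :
    flipCoord v ⁻¹' {f | e ∈ (fiberGraph f).edgeSet} = {f | e ∈ (fiberGraph f).edgeSet} := by
  induction e using Sym2.ind with
  | _ a b =>
    obtain ⟨hva, hvb⟩ : v ≠ a ∧ v ≠ b := by simpa [eq_comm] using hv
    ext f
    simp [flipCoord_apply, hva.symm, hvb.symm]

lemma flipCoord_preimage_edge_of_mem {v : V} {e : Sym2 V} (hv : v ∈ e) (he : ¬e.IsDiag) :
    flipCoord v ⁻¹' {f | e ∈ (fiberGraph f).edgeSet} =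
      {f | e ∈ (fiberGraph f).edgeSet}ᶜ := by
  induction e using Sym2.ind with
  | _ a b =>
    have hab : a ≠ b := by simpa using he
    ext f
    rcases Sym2.mem_iff.1 hv with rfl | rfl <;>
      simp [flipCoord_apply, hab, hab.symm, Bool.eq_not_iff]

end FlipCoord

lemma measurePreserving_uniformOn_univ {Ω : Type*} [Fintype Ω] [MeasurableSpace Ω]
    [DiscreteMeasurableSpace Ω] (σ : Ω ≃ Ω) :
    MeasurePreserving σ (uniformOn Set.univ) (uniformOn Set.univ) := by
  refine ⟨.of_discrete, Measure.ext fun s hs => ?_⟩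
  rw [Measure.map_apply .of_discrete hs, uniformOn_univ, uniformOn_univ,
    Measure.count_apply .of_discrete, Measure.count_apply hs,
    Set.encard_preimage_of_bijective σ.bijective]

lemma measure_inter_eq_half_of_measurePreserving {Ω : Type*} [MeasurableSpace Ω]
    {μ : Measure Ω} {σ : Ω → Ω} (hσ : MeasurePreserving σ μ μ)
    {A B : Set Ω} (hA : MeasurableSet A) (hB : MeasurableSet B) (hσA : σ ⁻¹' A = A)
    (hσB : σ ⁻¹' B = Bᶜ) : μ (A ∩ B) = μ A / 2 := by
  have hswap : μ (A ∩ B) = μ (A \ B) := by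
    rw [← hσ.measure_preimage (hA.inter hB).nullMeasurableSet, Set.preimage_inter, hσA, hσB,
      Set.sdiff_eq]
  rw [ENNReal.eq_div_iff two_ne_zero ENNReal.ofNat_ne_top, two_mul]
  nth_rw 2 [hswap]
  exact measure_inter_add_sdiff A hB

lemma uniformOn_inter_edgeSet_eq_half {V : Type*} [Fintype V] [DecidableEq V] {e : Sym2 V}
    (he : ¬e.IsDiag) {v : V} (hv : v ∈ e) {A : Set (V → Bool)}
    (hA : flipCoord v ⁻¹' A = A) :
    uniformOn Set.univ (A ∩ {f | e ∈ (fiberGraph f).edgeSet}) = uniformOn Set.univ A / 2 :=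
  measure_inter_eq_half_of_measurePreserving (measurePreserving_uniformOn_univ (flipCoord v))
    .of_discrete .of_discrete hA (flipCoord_preimage_edge_of_mem hv he)

lemma uniformOn_univ_setOf_const {V : Type*} [Fintype V] [DecidableEq V] [Nonempty V] :
    uniformOn Set.univ {f : V → Bool | ∀ a b, f a = f b} = (1 / 2) ^ (Fintype.card V - 1) := by
  have hconst : {f : V → Bool | ∀ a b, f a = f b} = Set.range (Function.const V) := by
    ext f
    refine ⟨fun h => ⟨f (Classical.arbitrary V), funext fun a => h _ a⟩, ?_⟩
    rintro ⟨c, rfl⟩ a b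
    rfl
  obtain ⟨n, hn⟩ := Nat.exists_eq_add_one.2 (Fintype.card_pos (α := V))
  rw [hconst, uniformOn_univ, Measure.count_apply .of_discrete, ← Set.image_univ,
    Function.const_injective.encard_image, Set.encard_univ, ENat.card_eq_coe_fintype_card,
    Fintype.card_fun, Fintype.card_bool, hn, Nat.add_sub_cancel]
  push_cast
  nth_rw 1 [pow_succ', ← mul_one (2 : ENNReal)]
  rw [ENNReal.mul_div_mul_left _ _ two_ne_zero ENNReal.ofNat_ne_top, one_div, one_div,
    ENNReal.inv_pow]

theorem pairwise_indep_disconnected_graphs_general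
    (N : ℕ) (hodd : Odd N) :
    ∃ (Ω : Type) (_ : MeasurableSpace Ω) (P : Measure Ω) (_ : IsProbabilityMeasure P)
      (G : Ω → SimpleGraph (Fin N)),
      (∀ e : Sym2 (Fin N), ¬e.IsDiag → P {ω | e ∈ (G ω).edgeSet} = 1 / 2) ∧
      (∀ e e' : Sym2 (Fin N), ¬e.IsDiag → ¬e'.IsDiag → e ≠ e' →
        P {ω | e ∈ (G ω).edgeSet ∧ e' ∈ (G ω).edgeSet} = 1 / 4) ∧
      P {ω | ¬(G ω).Connected} = 1 - (1 / 2) ^ (N - 1) ∧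
      P {ω | ¬∃ M : (G ω).Subgraph, M.IsPerfectMatching} = 1 := by
  have : NeZero N := ⟨hodd.pos.ne'⟩
  have edge_prob (e : Sym2 (Fin N)) (he : ¬e.IsDiag) :
      uniformOn Set.univ {f : Fin N → Bool | e ∈ (fiberGraph f).edgeSet} = 1 / 2 := by
    simpa using uniformOn_inter_edgeSet_eq_half he e.out_fst_mem (A := Set.univ) rfl
  refine ⟨Fin N → Bool, inferInstance, uniformOn Set.univ, inferInstance, fiberGraph,
    edge_prob, fun e e' he he' hne => ?_, ?_, ?_⟩
  · obtain ⟨v, hv', hv⟩ := Sym2.exists_mem_notMem_of_ne hne he'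
    rw [Set.ofPred_and, uniformOn_inter_edgeSet_eq_half he' hv'
      (flipCoord_preimage_edge_of_notMem hv), edge_prob e he, one_div, ENNReal.div_eq_inv_mul,
      ← ENNReal.mul_inv (by simp) (by simp)]
    norm_num
  · rw [← Set.compl_ofPred, prob_compl_eq_one_sub .of_discrete]
    simp_rw [fiberGraph_connected_iff]
    rw [uniformOn_univ_setOf_const, Fintype.card_fin]
  · convert measure_univ (μ := (uniformOn Set.univ : Measure (Fin N → Bool)))
    exact Set.eq_univ_of_forall fun f ⟨M, hM⟩ =>
      Nat.not_even_iff_odd.2 hodd (by simpa using hM.even_card)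

/-- There is a distribution on graphs on `{1,...,N}` (for odd `N ≥ 5`) whose edge indicators
are pairwise independent with edge probability `1/2`, yet the graph is disconnected with
probability `1 - 2^{1-N}` and contains no perfect matching with probability `1`. -/
theorem pairwise_indep_disconnected_graphs
    (N : ℕ) (hN : 5 ≤ N) (hodd : Odd N) :
    ∃ (Ω : Type) (_ : MeasurableSpace Ω) (P : Measure Ω) (_ : IsProbabilityMeasure P)
      (G : Ω → SimpleGraph (Fin N)),
      (∀ e : Sym2 (Fin N), ¬e.IsDiag → P {ω | e ∈ (G ω).edgeSet} = 1 / 2) ∧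
      (∀ e e' : Sym2 (Fin N), ¬e.IsDiag → ¬e'.IsDiag → e ≠ e' →
        P {ω | e ∈ (G ω).edgeSet ∧ e' ∈ (G ω).edgeSet} = 1 / 4) ∧
      P {ω | ¬(G ω).Connected} = 1 - (1 / 2) ^ (N - 1) ∧
      P {ω | ¬∃ M : (G ω).Subgraph, M.IsPerfectMatching} = 1 :=
  pairwise_indep_disconnected_graphs_general N hodd
end

section
/- Let G be a (p, α)-jumbled graph on N vertices in which every vertex has degree (1 ± o(1))pN, with α = O(√(pN)) and o(pN) ≤ α. Then for every vertex set V with |⌈Γ(V)| < 12|V| (where Γ̄(V) is the external neighborhood of V), one has |V| > N/170. -/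
open Finset

/-- Ordered count of adjacent pairs from `U` to `W` (internal edges counted twice). -/
def eCount {V : Type*} [DecidableEq V] (G : SimpleGraph V) [DecidableRel G.Adj]
    (U W : Finset V) : ℕ :=
  ((U ×ˢ W).filter fun q => G.Adj q.1 q.2).card

/-- A graph is `(p, α)`-jumbled if `|e(U,W) - p|U||W|| ≤ α √(|U||W|)` for all vertex sets. -/
def IsJumbled {V : Type*} [DecidableEq V] [Fintype V] (G : SimpleGraph V)
    [DecidableRel G.Adj] (p α : ℝ) : Prop :=
  ∀ U W : Finset V,
    |(eCount G U W : ℝ) - p * U.card * W.card| ≤ α * Real.sqrt (U.card * W.card)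

/-- The external neighborhood `Γ̄(V)`: vertices outside `V` adjacent to some vertex of `V`. -/
def extNbhd {V : Type*} [DecidableEq V] [Fintype V] (G : SimpleGraph V)
    [DecidableRel G.Adj] (S : Finset V) : Finset V :=
  univ.filter fun v => v ∉ S ∧ ∃ u ∈ S, G.Adj u v

/-- In a `(p, α)`-jumbled graph with almost regular degrees `(1 ± ε)pN` and `α ≤ ε p N`
(`α = o(pN)`, `α = O(√(pN))` being how such `α` arises), every vertex set `V` whose external
neighborhood has fewer than `12|V|` vertices satisfies `|V| > N/170`. -/
theorem expansion_of_jumbled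
    (N : ℕ) (hN : 0 < N) (G : SimpleGraph (Fin N)) [DecidableRel G.Adj]
    (p α ε : ℝ) (hp : 0 < p) (hε : 0 < ε) (hεsmall : ε ≤ 1 / 10000)
    (hjum : IsJumbled G p α) (hα : α ≤ ε * p * N)
    (hdeg : ∀ v, (1 - ε) * p * N ≤ (G.degree v : ℝ) ∧ (G.degree v : ℝ) ≤ (1 + ε) * p * N) :
    ∀ S : Finset (Fin N), ((extNbhd G S).card : ℝ) < 12 * S.card →
      (N : ℝ) / 170 < S.card := by
  intro S hS
  have hn0 : (0 : ℝ) < N := by exact_mod_cast hN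
  have hs0 : 0 < (S.card : ℝ) := by
    by_contra h
    push_neg at h
    have hc : (S.card : ℝ) = 0 := le_antisymm h (Nat.cast_nonneg _)
    have hext : (0:ℝ) ≤ ((extNbhd G S).card : ℝ) := Nat.cast_nonneg _
    nlinarith
  set T : Finset (Fin N) := S ∪ extNbhd G S with hT
  -- edges from S into univ equal edges from S into T
  have hfilter : ((S ×ˢ (univ : Finset (Fin N))).filter fun q => G.Adj q.1 q.2)
      = ((S ×ˢ T).filter fun q => G.Adj q.1 q.2) := by
    ext ⟨u, w⟩
    simp only [mem_filter, mem_product, mem_univ, true_and, and_true, hT, mem_union,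
      extNbhd]
    constructor
    · rintro ⟨hu, hadj⟩
      refine ⟨⟨hu, ?_⟩, hadj⟩
      by_cases hw : w ∈ S
      · exact Or.inl hw
      · exact Or.inr ⟨hw, u, hu, hadj⟩
    · rintro ⟨⟨hu, -⟩, hadj⟩
      exact ⟨hu, hadj⟩
  have hcount : eCount G S T = ∑ u ∈ S, G.degree u := by
    unfold eCount
    rw [← hfilter, card_filter, Finset.sum_product]
    refine Finset.sum_congr rfl fun u _ => ?_
    rw [← card_filter]
    rw [SimpleGraph.degree, ← SimpleGraph.neighborFinset_eq_filter]
  have hlow : (1 - ε) * p * N * S.card ≤ (eCount G S T : ℝ) := by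
    rw [hcount]
    push_cast
    calc (1 - ε) * p * N * S.card = ∑ _u ∈ S, (1 - ε) * p * (N : ℝ) := by
          rw [Finset.sum_const, nsmul_eq_mul]; ring
      _ ≤ ∑ u ∈ S, (G.degree u : ℝ) := Finset.sum_le_sum fun u _ => (hdeg u).1
  have hst : (S.card : ℝ) ≤ T.card := by
    exact_mod_cast Finset.card_le_card (Finset.subset_union_left)
  have ht13 : (T.card : ℝ) < 13 * S.card := by
    have := Finset.card_union_le S (extNbhd G S)
    have h' : (T.card : ℝ) ≤ S.card + (extNbhd G S).card := by exact_mod_cast this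
    linarith
  have ht0 : (0 : ℝ) ≤ T.card := Nat.cast_nonneg _
  have hsqrt : Real.sqrt (S.card * T.card) ≤ T.card :=
    calc Real.sqrt ((S.card : ℝ) * T.card) ≤ Real.sqrt ((T.card : ℝ) * T.card) :=
          Real.sqrt_le_sqrt (by nlinarith)
      _ = T.card := Real.sqrt_mul_self ht0
  have hj := hjum S T
  have hup : (eCount G S T : ℝ) ≤ p * S.card * T.card + ε * p * N * T.card := by
    have h1 : (eCount G S T : ℝ) - p * S.card * T.card ≤ α * Real.sqrt (S.card * T.card) :=
      (abs_le.mp hj).2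
    have h2 : α * Real.sqrt (S.card * T.card) ≤ ε * p * N * Real.sqrt (S.card * T.card) :=
      mul_le_mul_of_nonneg_right hα (Real.sqrt_nonneg _)
    have h3 : ε * p * N * Real.sqrt (S.card * T.card) ≤ ε * p * N * T.card :=
      mul_le_mul_of_nonneg_left hsqrt (by positivity)
    linarith
  have key : (1 - ε) * p * N * S.card ≤ 13 * p * S.card * S.card + 13 * ε * p * N * S.card := by
    have h4 : p * S.card * T.card ≤ p * S.card * (13 * S.card) :=
      mul_le_mul_of_nonneg_left ht13.le (by positivity)
    have h5 : ε * p * N * T.card ≤ ε * p * N * (13 * S.card) :=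
      mul_le_mul_of_nonneg_left ht13.le (by positivity)
    nlinarith
  nlinarith [mul_pos hp hs0, mul_pos (mul_pos hp hs0) hn0,
    mul_nonneg (mul_nonneg hp.le hn0.le) hs0.le, sq_nonneg ((S.card : ℝ) - N / 170)]
end

section
/- If every vertex of a graph G on N vertices has degree at least (1−o(1))pN, G is (p, c√(pN))-jumbled for a constant c, and p = ω(log N / N) with p = o(1), then the vertex connectivity of G is (1 ± o(1))pN. -/
/-!
For the upper bound, applying jumbledness to `U = W = V` gives a vertex of degree at most
`pN + α` (here `α = c √(pN) = o(pN)`), and deleting its neighbourhood isolates it.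

For the lower bound, take a minimum separator `S` with `|S| < (1 - δ) pN` and let `U` be the
smaller side of `G - S`, so every neighbour of a vertex of `U` lies in `U ∪ S`. There are no edges
between `U` and the other side `W`, which has `|W| ≥ N / 3`, so jumbledness gives
`p |U| ≤ 3 α² / (pN) = o(pN)`; on the other hand the degree of one vertex of `U` forces
`|U| ≥ (δ - o(1)) pN`. Summing degrees over `U` and bounding `e(U, U) + e(U, S)` by jumbledness
then yields `(1 - o(1)) pN |U| ≤ o(pN) |U|`, a contradiction.
-/

open Finset

/-- The vertex connectivity of `G`: the least size of a vertex set whose removal leaves a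
non-connected graph. -/
noncomputable def vertexConnectivity {V : Type*} [Fintype V] (G : SimpleGraph V) : ℕ :=
  sInf {m : ℕ | ∃ S : Finset V, S.card = m ∧
    ¬(SimpleGraph.induce ((↑S : Set V)ᶜ) G).Connected}

theorem mul_sqrt_le_mul_of_div_sq_le {c θ x : ℝ} (hθ : 0 < θ) (h : (c / θ) ^ 2 ≤ x) :
    c * √x ≤ θ * x := by
  have hc : c ≤ θ * √x := (div_le_iff₀' hθ).1 (Real.le_sqrt_of_sq_le h)
  calc c * √x ≤ θ * √x * √x := mul_le_mul_of_nonneg_right hc (Real.sqrt_nonneg x)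
    _ = θ * x := by rw [mul_assoc, Real.mul_self_sqrt ((sq_nonneg _).trans h)]

theorem two_mul_sqrt_mul_le_add {a b : ℝ} (ha : 0 ≤ a) (hb : 0 ≤ b) :
    2 * √(a * b) ≤ a + b := by
  have := two_mul_le_add_sq √a √b
  rwa [Real.sq_sqrt ha, Real.sq_sqrt hb, mul_assoc, ← Real.sqrt_mul ha] at this

section Counting

variable {V : Type*} [DecidableEq V] (G : SimpleGraph V) [DecidableRel G.Adj]

theorem eCount_eq_sum (U W : Finset V) : eCount G U W = ∑ u ∈ U, #{w ∈ W | G.Adj u w} := by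
  rw [eCount, card_filter, sum_product]
  exact sum_congr rfl fun u _ => (card_filter _ _).symm

theorem eCount_union_right_le (U A B : Finset V) :
    eCount G U (A ∪ B) ≤ eCount G U A + eCount G U B := by
  simp only [eCount_eq_sum, ← sum_add_distrib, filter_union]
  exact sum_le_sum fun u _ => card_union_le _ _

theorem sum_degree_le_eCount [Fintype V] {U T : Finset V}
    (h : ∀ u ∈ U, G.neighborFinset u ⊆ T) : ∑ u ∈ U, G.degree u ≤ eCount G U T := by
  rw [eCount_eq_sum]
  refine sum_le_sum fun u hu => card_le_card fun w hw => ?_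
  exact mem_filter.2 ⟨h u hu hw, (G.mem_neighborFinset u w).1 hw⟩

theorem eCount_compl_eq_zero [Fintype V] {U T : Finset V}
    (h : ∀ u ∈ U, G.neighborFinset u ⊆ T) : eCount G U Tᶜ = 0 := by
  rw [eCount_eq_sum]
  refine sum_eq_zero fun u hu => card_eq_zero.2 (filter_eq_empty_iff.2 fun w hw hadj => ?_)
  exact mem_compl.1 hw (h u hu ((G.mem_neighborFinset u w).2 hadj))

end Counting

section VertexConnectivity

variable {V : Type*} [Fintype V] (G : SimpleGraph V)

theorem exists_card_eq_vertexConnectivity :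
    ∃ S : Finset V, #S = vertexConnectivity G ∧ ¬(G.induce (↑S : Set V)ᶜ).Connected := by
  refine Nat.sInf_mem
    (s := {m | ∃ S : Finset V, #S = m ∧ ¬(G.induce (↑S : Set V)ᶜ).Connected})
    ⟨_, univ, rfl, fun h => ?_⟩
  obtain ⟨⟨v, hv⟩⟩ := h.nonempty
  simp at hv

theorem vertexConnectivity_le_degree [DecidableRel G.Adj] {v : V}
    (h : G.degree v + 1 < Fintype.card V) : vertexConnectivity G ≤ G.degree v := by
  classical
  obtain ⟨u, -, hu⟩ := exists_mem_notMem_of_card_lt_card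
    ((card_insert_le v (G.neighborFinset v)).trans_lt (h.trans_eq card_univ.symm))
  refine Nat.sInf_le ⟨G.neighborFinset v, rfl, fun hconn => ?_⟩
  have hv : v ∈ (↑(G.neighborFinset v) : Set V)ᶜ := by simp
  have hu' : u ∈ (↑(G.neighborFinset v) : Set V)ᶜ := fun h => hu (mem_insert_of_mem h)
  obtain ⟨w⟩ := hconn.preconnected ⟨v, hv⟩ ⟨u, hu'⟩
  have hvu : (⟨v, hv⟩ : ((↑(G.neighborFinset v) : Set V)ᶜ : Set V)) ≠ ⟨u, hu'⟩ :=
    fun heq => hu (by obtain rfl : v = u := congrArg Subtype.val heq; exact mem_insert_self v _)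
  exact (w.getVert 1).2
    ((G.mem_neighborFinset v _).2 (w.adj_snd (SimpleGraph.Walk.not_nil_of_ne hvu)))

variable [DecidableEq V] [DecidableRel G.Adj]

theorem neighborFinset_subset_compl_union {S U : Finset V}
    (hU : ∀ u ∈ U, G.neighborFinset u ⊆ U ∪ S) :
    ∀ w ∈ (U ∪ S)ᶜ, G.neighborFinset w ⊆ (U ∪ S)ᶜ ∪ S := by
  intro w hw z hz
  by_contra hzn
  have hzU : z ∈ U := by
    simp only [mem_union, mem_compl, not_or] at hzn
    tauto
  have := hU z hzU ((G.mem_neighborFinset z w).2 ((G.mem_neighborFinset w z).1 hz).symm)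
  simp_all

theorem exists_small_side_of_not_connected {S : Finset V} (hS : S ≠ univ)
    (h : ¬(G.induce (↑S : Set V)ᶜ).Connected) :
    ∃ U : Finset V, U.Nonempty ∧ (∀ u ∈ U, G.neighborFinset u ⊆ U ∪ S) ∧
      #U ≤ #(U ∪ S)ᶜ := by
  classical
  obtain ⟨x₀, hx₀⟩ : ∃ x, x ∉ S := by simpa [eq_univ_iff_forall] using hS
  have : Nonempty (((↑S : Set V)ᶜ : Set V)) := ⟨⟨x₀, hx₀⟩⟩
  have hpre : ¬(G.induce (↑S : Set V)ᶜ).Preconnected :=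
    fun hpre => h ((SimpleGraph.connected_iff _).2 ⟨hpre, this⟩)
  unfold SimpleGraph.Preconnected at hpre
  push Not at hpre
  obtain ⟨x, y, hxy⟩ := hpre
  set C : Finset V := {v | ∃ hv : v ∉ S, (G.induce (↑S : Set V)ᶜ).Reachable x ⟨v, hv⟩}
  have hC : ∀ u ∈ C, G.neighborFinset u ⊆ C ∪ S := by
    intro u hu z hz
    obtain ⟨_, hxu⟩ := (mem_filter.1 hu).2
    by_cases hzS : z ∈ S
    · exact mem_union_right _ hzS
    · refine mem_union_left _ (mem_filter.2 ⟨mem_univ _, hzS, hxu.trans ?_⟩)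
      exact SimpleGraph.Adj.reachable (G := G.induce _) ((G.mem_neighborFinset u z).1 hz)
  have hxC : x.1 ∈ C := mem_filter.2 ⟨mem_univ _, x.2, .rfl⟩
  have hyC : y.1 ∈ (C ∪ S)ᶜ := by
    simp only [mem_compl, mem_union, not_or]
    exact ⟨fun hy => hxy (mem_filter.1 hy).2.2, y.2⟩
  rcases le_total #C #(C ∪ S)ᶜ with hle | hle
  · exact ⟨C, ⟨x, hxC⟩, hC, hle⟩
  · refine ⟨(C ∪ S)ᶜ, ⟨y, hyC⟩, neighborFinset_subset_compl_union G hC,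
      hle.trans (card_le_card fun v hv => ?_)⟩
    have hvS : v ∉ S := (mem_filter.1 hv).2.1
    simp [hv, hvS]

end VertexConnectivity

namespace IsJumbled

variable {V : Type*} [DecidableEq V] [Fintype V] {G : SimpleGraph V} [DecidableRel G.Adj]
  {p α δ : ℝ}

theorem eCount_le (hj : IsJumbled G p α) (U W : Finset V) :
    (eCount G U W : ℝ) ≤ p * #U * #W + α * √(#U * #W) := by
  linarith [(abs_le.1 (hj U W)).2]

theorem sq_mul_le_of_eCount_eq_zero (hj : IsJumbled G p α) (hp : 0 ≤ p) {U W : Finset V}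
    (h : eCount G U W = 0) : p ^ 2 * (#U * #W) ≤ α ^ 2 := by
  set x : ℝ := #U * #W
  have hle : p * x ≤ α * √x := by
    have := (abs_le.1 (hj U W)).1
    rw [h, Nat.cast_zero] at this
    linarith
  have hx0 : 0 ≤ x := by positivity
  clear_value x
  rcases hx0.eq_or_lt with hx | hx
  · rw [← hx, mul_zero]
    positivity
  · have hsq : (p * x) ^ 2 ≤ (α * √x) ^ 2 := pow_le_pow_left₀ (by positivity) hle 2
    rw [mul_pow, mul_pow, Real.sq_sqrt hx.le] at hsq
    nlinarith

theorem exists_degree_le [Nonempty V] (hj : IsJumbled G p α) :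
    ∃ v, (G.degree v : ℝ) ≤ p * Fintype.card V + α := by
  obtain ⟨v, -, hv⟩ := exists_min_image univ (fun v => G.degree v) univ_nonempty
  refine ⟨v, le_of_mul_le_mul_left ?_ (Nat.cast_pos.2 (Fintype.card_pos (α := V)))⟩
  have hsum : Fintype.card V * G.degree v ≤ eCount G univ univ :=
    calc Fintype.card V * G.degree v = ∑ _w : V, G.degree v := by simp
      _ ≤ ∑ w, G.degree w := sum_le_sum fun w _ => hv w (mem_univ w)
      _ ≤ eCount G univ univ := sum_degree_le_eCount G fun _ _ => subset_univ _
  have hj' := hj.eCount_le univ univ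
  rw [card_univ, Real.sqrt_mul_self (Nat.cast_nonneg _)] at hj'
  calc (Fintype.card V : ℝ) * G.degree v ≤ eCount G univ univ := by exact_mod_cast hsum
    _ ≤ _ := hj'
    _ = _ := by ring

theorem nonneg [Nonempty V] (hj : IsJumbled G p α) : 0 ≤ α := by
  have h := (abs_nonneg _).trans (hj univ univ)
  rw [Real.sqrt_mul_self (Nat.cast_nonneg _)] at h
  exact nonneg_of_mul_nonneg_left h (by simpa using Fintype.card_pos)

theorem card_mul_le_of_neighborFinset_subset (hj : IsJumbled G p α) {m : ℝ} {U S : Finset V}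
    (hdeg : ∀ u ∈ U, m ≤ G.degree u) (h : ∀ u ∈ U, G.neighborFinset u ⊆ U ∪ S) :
    #U * m ≤ (p * #U * #U + α * #U) + (p * #U * #S + α * √(#U * #S)) := by
  have hUU := hj.eCount_le U U
  rw [Real.sqrt_mul_self (Nat.cast_nonneg _)] at hUU
  have hcount : ∑ u ∈ U, G.degree u ≤ eCount G U U + eCount G U S :=
    (sum_degree_le_eCount G h).trans (eCount_union_right_le G U U S)
  calc #U * m ≤ ∑ u ∈ U, (G.degree u : ℝ) := by
        simpa using card_nsmul_le_sum U (fun v => (G.degree v : ℝ)) m hdeg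
    _ ≤ eCount G U U + eCount G U S := by exact_mod_cast hcount
    _ ≤ _ := add_le_add hUU (hj.eCount_le U S)

theorem sq_mul_card_mul_card_le (hj : IsJumbled G p α) (hp : 0 ≤ p) {S U : Finset V}
    (hUS : ∀ u ∈ U, G.neighborFinset u ⊆ U ∪ S) (hcard : #U ≤ #(U ∪ S)ᶜ)
    (hS : 8 * #S ≤ Fintype.card V) : p ^ 2 * #U * Fintype.card V ≤ 3 * α ^ 2 := by
  have hW : Fintype.card V ≤ 3 * #(U ∪ S)ᶜ := by
    have := card_add_card_compl (U ∪ S)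
    have := card_union_le U S
    omega
  calc p ^ 2 * #U * Fintype.card V ≤ p ^ 2 * #U * (3 * #(U ∪ S)ᶜ : ℕ) := by gcongr
    _ = 3 * (p ^ 2 * (#U * #(U ∪ S)ᶜ)) := by push_cast; ring
    _ ≤ 3 * α ^ 2 := by
      gcongr
      exact hj.sq_mul_le_of_eCount_eq_zero hp (eCount_compl_eq_zero G hUS)

theorem le_card_of_neighborFinset_subset (hj : IsJumbled G p α) (hp₀ : 0 ≤ p)
    (hp : p ≤ δ / 8) (hα : α ≤ δ / 8 * (p * Fintype.card V))
    (hdeg : ∀ v, (1 - δ / 8) * (p * Fintype.card V) ≤ G.degree v)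
    {S U : Finset V} (hU : U.Nonempty) (hUS : ∀ u ∈ U, G.neighborFinset u ⊆ U ∪ S)
    (hcard : #U ≤ #(U ∪ S)ᶜ) : (1 - δ) * (p * Fintype.card V) ≤ #S := by
  obtain ⟨u, hu⟩ := hU
  have : Nonempty V := ⟨u⟩
  have hα₀ := hj.nonneg
  set N : ℝ := (Fintype.card V : ℝ)
  set n := p * N
  by_contra! hs
  have hN₀ : 0 ≤ N := by positivity
  have hs₀ : (0 : ℝ) ≤ #S := by positivity
  have hn : 0 < n := by nlinarith
  have hδ : δ < 1 := by nlinarith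
  have hδ₀ : 0 ≤ δ := by nlinarith
  have hnN : n ≤ N / 8 := by nlinarith
  have hsmall : p ^ 2 * #U * N ≤ 3 * α ^ 2 :=
    hj.sq_mul_card_mul_card_le hp₀ hUS hcard
      ((Nat.cast_le (α := ℝ)).1 (by push_cast; linarith))
  have hlarge : δ * n ≤ 2 * #U := by
    have : (G.degree u : ℝ) ≤ #U + #S := by
      exact_mod_cast (card_le_card (hUS u hu)).trans (card_union_le U S)
    linarith [hdeg u]
  have hsum := hj.card_mul_le_of_neighborFinset_subset (fun v _ => hdeg v) hUS
  have ha₀ : (1 : ℝ) ≤ #U := by exact_mod_cast card_pos.2 ⟨u, hu⟩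
  set a : ℝ := (#U : ℝ)
  set s : ℝ := (#S : ℝ)
  clear_value a s
  have hpa : p * a ≤ n / 16 := by
    have : α ^ 2 ≤ (δ / 8 * n) ^ 2 := pow_le_pow_left₀ hα₀ hα 2
    nlinarith
  have hamgm := two_mul_sqrt_mul_le_add (by linarith : 0 ≤ a) hs₀
  have hαn : α ≤ n / 8 := by nlinarith
  have hαs : α * s ≤ a * n / 4 :=
    calc α * s ≤ δ / 8 * n * s := mul_le_mul_of_nonneg_right hα hs₀
      _ = n / 8 * (δ * s) := by ring
      _ ≤ n / 8 * (δ * n) := by gcongr; linarith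
      _ ≤ n / 8 * (2 * a) := by gcongr
      _ = a * n / 4 := by ring
  have hpaa : p * a * a ≤ n / 16 * a := mul_le_mul_of_nonneg_right hpa (by linarith)
  have hαa : α * a ≤ n / 8 * a := mul_le_mul_of_nonneg_right hαn (by linarith)
  have hpas : p * a * s ≤ 1 / 8 * a * n := by gcongr <;> linarith
  have hαr : α * (2 * √(a * s)) ≤ α * (a + s) := mul_le_mul_of_nonneg_left hamgm hα₀
  have hδan : a * (δ * n) ≤ a * n := mul_le_mul_of_nonneg_left (by nlinarith) (by linarith)
  have han : 0 < a * n := mul_pos (by linarith) hn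
  linarith

theorem le_vertexConnectivity (hj : IsJumbled G p α) (hp₀ : 0 ≤ p) (hp : p ≤ δ / 8)
    (hα : α ≤ δ / 8 * (p * Fintype.card V))
    (hdeg : ∀ v, (1 - δ / 8) * (p * Fintype.card V) ≤ G.degree v) :
    (1 - δ) * (p * Fintype.card V) ≤ vertexConnectivity G := by
  obtain ⟨S, hS, hconn⟩ := exists_card_eq_vertexConnectivity G
  rw [← hS]
  by_cases hSu : S = univ
  · have hδp : (1 - δ) * p ≤ 1 := by
      nlinarith [mul_le_mul_of_nonneg_left hp hp₀, sq_nonneg (p - 1 / 16)]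
    rw [hSu, card_univ, ← mul_assoc]
    exact mul_le_of_le_one_left (Nat.cast_nonneg _) hδp
  · obtain ⟨U, hU, hUS, hcard⟩ := exists_small_side_of_not_connected G hSu hconn
    exact hj.le_card_of_neighborFinset_subset hp₀ hp hα hdeg hU hUS hcard

theorem vertexConnectivity_le [Nonempty V] (hj : IsJumbled G p α)
    (h : p * Fintype.card V + α + 1 < Fintype.card V) :
    (vertexConnectivity G : ℝ) ≤ p * Fintype.card V + α := by
  obtain ⟨v, hv⟩ := hj.exists_degree_le
  have hlt : G.degree v + 1 < Fintype.card V := by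
    exact_mod_cast (by linarith : (G.degree v : ℝ) + 1 < Fintype.card V)
  exact (Nat.cast_le.2 (vertexConnectivity_le_degree G hlt)).trans hv

end IsJumbled

theorem connectivity_of_jumbled_general (c δ : ℝ) (hδ : 0 < δ) :
    ∃ ε : ℝ, 0 < ε ∧ ∃ C : ℝ, ∃ N₀ : ℕ, ∀ N, N₀ ≤ N → ∀ p : ℝ,
      C * Real.log N / N ≤ p → p ≤ ε →
      ∀ (G : SimpleGraph (Fin N)) [DecidableRel G.Adj],
        (∀ v, (1 - ε) * p * N ≤ (G.degree v : ℝ)) →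
        IsJumbled G p (c * Real.sqrt (p * N)) →
        (1 - δ) * p * N ≤ (vertexConnectivity G : ℝ) ∧
          (vertexConnectivity G : ℝ) ≤ (1 + δ) * p * N := by
  set η := min δ 1
  have hη : 0 < η := lt_min hδ one_pos
  set L := (c / (η / 8)) ^ 2 + 1 with hL_def
  have hL₀ : 0 < L := by positivity
  have hlog2 : 0 < Real.log 2 := Real.log_pos one_lt_two
  refine ⟨η / 8, by positivity, L / Real.log 2, 2, fun N hN p hlog hpη G _ hdeg hj => ?_⟩
  have hN' : (2 : ℝ) ≤ N := by exact_mod_cast hN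
  have hL : L ≤ p * N := by
    have hlogN : L * Real.log 2 ≤ L * Real.log N :=
      mul_le_mul_of_nonneg_left (Real.log_le_log two_pos hN') hL₀.le
    have h := (div_le_iff₀ (by positivity)).1 hlog
    rw [div_mul_eq_mul_div, div_le_iff₀ hlog2] at h
    exact le_of_mul_le_mul_right (hlogN.trans h) hlog2
  have hpN : 0 < p * N := hL₀.trans_le hL
  have hp₀ : 0 ≤ p := by nlinarith
  have hα : c * √(p * N) ≤ η / 8 * (p * N) :=
    mul_sqrt_le_mul_of_div_sq_le (by positivity) (by linarith)
  have hηδ : η ≤ δ := min_le_left δ 1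
  have hη1 : η ≤ 1 := min_le_right δ 1
  have hpN8 : p * N ≤ N / 8 := by nlinarith
  have : Nonempty (Fin N) := ⟨⟨0, by omega⟩⟩
  constructor
  · calc (1 - δ) * p * N ≤ (1 - η) * (p * N) := by nlinarith
      _ ≤ vertexConnectivity G := by
        simpa using hj.le_vertexConnectivity hp₀ hpη (by simpa using hα)
          (by simpa [mul_assoc] using hdeg)
  · calc (vertexConnectivity G : ℝ) ≤ p * N + c * √(p * N) := by
          simpa using hj.vertexConnectivity_le (by simp only [Fintype.card_fin]; nlinarith)
      _ ≤ (1 + δ) * p * N := by nlinarith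

/-- Graphs with minimum degree `(1-o(1))pN` that are `(p, c√(pN))`-jumbled, with
`ω(log N / N) = p = o(1)`, have vertex connectivity `(1 ± o(1))pN`. -/
theorem connectivity_of_jumbled (c δ : ℝ) (hc : 0 < c) (hδ : 0 < δ) :
    ∃ ε : ℝ, 0 < ε ∧ ∃ C : ℝ, ∃ N₀ : ℕ, ∀ N, N₀ ≤ N → ∀ p : ℝ,
      C * Real.log N / N ≤ p → p ≤ ε →
      ∀ (G : SimpleGraph (Fin N)) [DecidableRel G.Adj],
        (∀ v, (1 - ε) * p * N ≤ (G.degree v : ℝ)) →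
        IsJumbled G p (c * Real.sqrt (p * N)) →
        (1 - δ) * p * N ≤ (vertexConnectivity G : ℝ) ∧
          (vertexConnectivity G : ℝ) ≤ (1 + δ) * p * N :=
  connectivity_of_jumbled_general c δ hδ
end
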